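/- For each integer N ≥ 3, let (F^N_t)_{t≥0} be a filtration on a probability space carrying, for each t ≥ 1, ℕ-valued random variables ν^N_t(1),…,ν^N_t(N) with ∑_{i=1}^N ν^N_t(i) = N almost surely, where ν^N_t is F^N_t-measurable. Define c_N(t) and D_N(t) from the vector ν^N_t, and τ_N(t) := inf{s ≥ 1 : ∑_{r=1}^s c_N(r) ≥ t}, assumed almost surely finite for every finite t. Suppose there is a deterministic sequence (b_N) with b_N → 0 such that for all N and all t ≥ 1, almost surely (1/(N(N−1)(N−2))) ∑_{i=1}^N E[(ν^N_t(i))_3 | F^N_{t−1}] ≤ b_N · (1/(N(N−1))) ∑_{i=1}^N E[(ν^N_t(i))_2 | F^N_{t−1}]. Then for all fixed reals 0 ≤ s < t, E[∑_{r=τ_N(s)+1}^{τ_N(t)} D_N(r)] → 0 as N → ∞. -/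

import Mathlib

/-!
When `∑ i, ν i = N`, the multiple-merger bound is dominated pathwise by
`2 (1/(N)₃) ∑ (ν_i)₃ + (4/N) c_N`, by Cauchy–Schwarz with weights `ν_i`.
The event `{τ_N(s) < r ≤ τ_N(t)}` only depends on the first `r - 1` generations, so
conditioning on `F_{r-1}` and the moment condition give
`E[D_N(r); τ_N(s) < r ≤ τ_N(t)] ≤ (2 b_N + 4/N) E[c_N(r); τ_N(s) < r ≤ τ_N(t)]`.
Summing over `r`, the cumulated pair rate over the window is at most `max t 0 + 1`, because
`c_N ≤ 1` and the window stops as soon as the cumulated rate reaches `t`.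
-/

open MeasureTheory Finset Filter

/-- Pair merger rate `c_N` of a vector of offspring counts. -/
noncomputable def pairRate (N : ℕ) (ν : Fin N → ℕ) : ℝ :=
  (1 / ((N : ℝ) * (N - 1))) * ∑ i, (ν i : ℝ) * ((ν i : ℝ) - 1)

/-- Multiple-merger bound `D_N` of a vector of offspring counts. -/
noncomputable def multiRate (N : ℕ) (ν : Fin N → ℕ) : ℝ :=
  (1 / ((N : ℝ) ^ 2 * (N - 1))) * ∑ i, (ν i : ℝ) * ((ν i : ℝ) - 1) *
    ((ν i : ℝ) + (1 / (N : ℝ)) * ∑ j ∈ Finset.univ.erase i, (ν j : ℝ) ^ 2)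

/-- Generalized inverse `τ(t) = inf {s ≥ 1 : ∑_{r=1}^s c r ≥ t}` of the cumulated
sequence `c`. -/
noncomputable def genInv (c : ℕ → ℝ) (t : ℝ) : ℕ :=
  sInf {s : ℕ | 1 ≤ s ∧ t ≤ ∑ r ∈ Finset.Icc 1 s, c r}

open scoped ENNReal

noncomputable def thirdRate (N : ℕ) (ν : Fin N → ℕ) : ℝ :=
  (1 / ((N : ℝ) * (N - 1) * (N - 2))) * ∑ i, (ν i : ℝ) * ((ν i : ℝ) - 1) * ((ν i : ℝ) - 2)

lemma natCast_mul_natCast_sub_one_nonneg (n : ℕ) : 0 ≤ (n : ℝ) * (n - 1) := by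
  rcases n with _ | n
  · simp
  · push_cast; nlinarith

lemma natCast_mul_natCast_sub_one_mul_natCast_sub_two_nonneg (n : ℕ) :
    0 ≤ (n : ℝ) * (n - 1) * (n - 2) := by
  match n with
  | 0 | 1 | 2 => norm_num
  | n + 3 => push_cast; ring_nf; positivity

lemma pairRate_nonneg (N : ℕ) (ν : Fin N → ℕ) : 0 ≤ pairRate N ν :=
  mul_nonneg (one_div_nonneg.2 (natCast_mul_natCast_sub_one_nonneg N))
    (sum_nonneg fun i _ => natCast_mul_natCast_sub_one_nonneg (ν i))

lemma multiRate_nonneg (N : ℕ) (ν : Fin N → ℕ) : 0 ≤ multiRate N ν := by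
  have hN : 0 ≤ (N : ℝ) ^ 2 * (N - 1) := by
    rw [sq, mul_assoc]; exact mul_nonneg (Nat.cast_nonneg N) (natCast_mul_natCast_sub_one_nonneg N)
  refine mul_nonneg (one_div_nonneg.2 hN) (sum_nonneg fun i _ => ?_)
  exact mul_nonneg (natCast_mul_natCast_sub_one_nonneg (ν i)) (by positivity)

lemma pairRate_le_one {N : ℕ} (ν : Fin N → ℕ) (hν : ∑ i, ν i = N) : pairRate N ν ≤ 1 := by
  have hsum : ∑ i, (ν i : ℝ) = N := by exact_mod_cast hν
  have hle : ∀ i, (ν i : ℝ) ≤ N := fun i => by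
    rw [← hν]; exact_mod_cast single_le_sum (fun j _ => Nat.zero_le (ν j)) (mem_univ i)
  rw [pairRate, one_div_mul_eq_div]
  refine div_le_one_of_le₀ ?_ (by simpa using natCast_mul_natCast_sub_one_nonneg N)
  calc ∑ i, (ν i : ℝ) * ((ν i : ℝ) - 1) ≤ ∑ i, (ν i : ℝ) * ((N : ℝ) - 1) :=
        sum_le_sum fun i _ => mul_le_mul_of_nonneg_left (by linarith [hle i]) (Nat.cast_nonneg _)
    _ = N * (N - 1) := by rw [← sum_mul, hsum]

/-- Drop the restriction `j ≠ i`, use `∑ j, x j ^ 2 = A + n` and bound `A ^ 2 ≤ n (T + A)` by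
Cauchy–Schwarz with weights `x i`, where `A` and `T` are the second and third falling moments. -/
lemma sum_mul_sub_one_mul_add_le {ι : Type*} [Fintype ι] [DecidableEq ι] (x : ι → ℝ)
    (hx : ∀ i, 0 ≤ x i) (hx₁ : ∀ i, 0 ≤ x i * (x i - 1)) {n : ℝ} (hn : 0 < n)
    (hsum : ∑ i, x i = n) :
    ∑ i, x i * (x i - 1) * (x i + 1 / n * ∑ j ∈ univ.erase i, x j ^ 2) ≤
      2 * ∑ i, x i * (x i - 1) * (x i - 2) + 4 * ∑ i, x i * (x i - 1) := by
  set A := ∑ i, x i * (x i - 1)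
  set T := ∑ i, x i * (x i - 1) * (x i - 2)
  have hsq : ∀ i, ∑ j ∈ univ.erase i, x j ^ 2 ≤ A + n := fun i =>
    calc ∑ j ∈ univ.erase i, x j ^ 2 ≤ ∑ j, x j ^ 2 :=
          sum_le_sum_of_subset_of_nonneg (erase_subset _ _) fun j _ _ => sq_nonneg _
      _ = A + n := by rw [← hsum, ← sum_add_distrib]; exact sum_congr rfl fun j _ => by ring
  have hcs : A ^ 2 ≤ n * (T + A) := by
    have h := sum_sq_le_sum_mul_sum_of_sq_le_mul univ (r := fun i => x i * (x i - 1))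
      (fun i _ => hx i) (fun i _ => mul_nonneg (hx i) (sq_nonneg (x i - 1)))
      (fun i _ => le_of_eq (by ring))
    rwa [hsum, show ∑ i, x i * (x i - 1) ^ 2 = T + A by
      rw [← sum_add_distrib]; exact sum_congr rfl fun i _ => by ring] at h
  have hsplit : ∀ c, ∑ i, x i * (x i - 1) * (x i + c) = T + (2 + c) * A := fun c => by
    rw [mul_sum, ← sum_add_distrib]; exact sum_congr rfl fun i _ => by ring
  calc _ ≤ ∑ i, x i * (x i - 1) * (x i + 1 / n * (A + n)) :=
        sum_le_sum fun i _ => by gcongr; exact hx₁ i; exact hsq i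
    _ = T + 3 * A + A ^ 2 / n := by rw [hsplit]; field_simp; ring
    _ ≤ 2 * T + 4 * A := by linarith [(div_le_iff₀' hn).2 hcs]

lemma multiRate_le {N : ℕ} (hN : 3 ≤ N) (ν : Fin N → ℕ) (hν : ∑ i, ν i = N) :
    multiRate N ν ≤ 2 * thirdRate N ν + 4 / N * pairRate N ν := by
  have hN' : (3 : ℝ) ≤ N := by exact_mod_cast hN
  have hT : 0 ≤ ∑ i, (ν i : ℝ) * ((ν i : ℝ) - 1) * ((ν i : ℝ) - 2) :=
    sum_nonneg fun i _ => natCast_mul_natCast_sub_one_mul_natCast_sub_two_nonneg (ν i)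
  have hkey := sum_mul_sub_one_mul_add_le (fun i => (ν i : ℝ)) (fun i => Nat.cast_nonneg _)
    (fun i => natCast_mul_natCast_sub_one_nonneg (ν i)) (by positivity : (0 : ℝ) < N)
    (by exact_mod_cast hν)
  have h₁ : (0 : ℝ) < N - 1 := by linarith
  have h₂ : (0 : ℝ) < N - 2 := by linarith
  have hcoef : 1 / ((N : ℝ) ^ 2 * (N - 1)) ≤ 1 / (N * (N - 1) * (N - 2)) :=
    one_div_le_one_div_of_le (by positivity) (by nlinarith)
  rw [multiRate, thirdRate, pairRate]
  calc _ ≤ 1 / ((N : ℝ) ^ 2 * (N - 1)) * (2 * ∑ i, (ν i : ℝ) * ((ν i : ℝ) - 1) * ((ν i : ℝ) - 2)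
          + 4 * ∑ i, (ν i : ℝ) * ((ν i : ℝ) - 1)) :=
        mul_le_mul_of_nonneg_left hkey (by positivity)
    _ = 2 * (1 / ((N : ℝ) ^ 2 * (N - 1)) * ∑ i, (ν i : ℝ) * ((ν i : ℝ) - 1) * ((ν i : ℝ) - 2))
          + 4 / N * (1 / (N * (N - 1)) * ∑ i, (ν i : ℝ) * ((ν i : ℝ) - 1)) := by
        field_simp
    _ ≤ _ := by gcongr

section genInv

variable (q : ℕ → ℝ)

lemma genInv_lt_iff {a : ℝ} (h : {u : ℕ | 1 ≤ u ∧ a ≤ ∑ v ∈ Icc 1 u, q v}.Nonempty) (r : ℕ) :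
    genInv q a < r ↔ ∃ u < r, 1 ≤ u ∧ a ≤ ∑ v ∈ Icc 1 u, q v := by
  rw [genInv, csInf_lt_iff (OrderBot.bddBelow _) h]
  simp only [Set.mem_ofPred_eq]
  tauto

lemma sum_Icc_genInv_le (hq : ∀ v, 1 ≤ v → q v ≤ 1) {a : ℝ}
    (h : {u : ℕ | 1 ≤ u ∧ a ≤ ∑ v ∈ Icc 1 u, q v}.Nonempty) :
    ∑ r ∈ Icc 1 (genInv q a), q r ≤ max a 0 + 1 := by
  obtain ⟨hτ, -⟩ : genInv q a ∈ _ := Nat.sInf_mem h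
  obtain ⟨k, hk⟩ : ∃ k, genInv q a = k + 1 := ⟨genInv q a - 1, by omega⟩
  have hbefore : ∑ r ∈ Icc 1 k, q r ≤ max a 0 := by
    rcases Nat.eq_zero_or_pos k with rfl | hk0
    · simp
    · have := Nat.notMem_of_lt_sInf (s := {u : ℕ | 1 ≤ u ∧ a ≤ ∑ v ∈ Icc 1 u, q v})
        (m := k) (by unfold genInv at hk; omega)
      simp only [Set.mem_ofPred_eq, not_and, not_le] at this
      exact (this hk0).le.trans (le_max_left _ _)
  rw [hk, sum_Icc_succ_top (by omega)]
  exact add_le_add hbefore (hq _ (by omega))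

end genInv

section

variable {Ω : Type*}

lemma measurableSet_exists_lt {m0 : MeasurableSpace Ω} {F : Filtration ℕ m0} {A : ℕ → Set Ω}
    (hA : ∀ u, MeasurableSet[F u] (A u)) (r : ℕ) :
    MeasurableSet[F (r - 1)] {ω | ∃ u < r, ω ∈ A u} := by
  have : {ω | ∃ u < r, ω ∈ A u} = ⋃ u ∈ range r, A u := by ext; simp
  rw [this]
  exact Finset.measurableSet_biUnion _ fun u hu => F.mono (by simp at hu; omega) _ (hA u)

lemma condExp_const_mul_sum {m m0 : MeasurableSpace Ω} {μ : Measure Ω} {ι : Type*}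
    (s : Finset ι) (a : ℝ) {f : ι → Ω → ℝ} (hf : ∀ i ∈ s, Integrable (f i) μ) :
    μ[fun ω => a * ∑ i ∈ s, f i ω | m] =ᵐ[μ] fun ω => a * ∑ i ∈ s, μ[f i | m] ω := by
  have h : (fun ω => a * ∑ i ∈ s, f i ω) = a • ∑ i ∈ s, f i := by ext; simp [Finset.sum_apply]
  filter_upwards [condExp_smul (μ := μ) a (∑ i ∈ s, f i) m, condExp_finsetSum hf m]
    with ω h₁ h₂
  rw [h, h₁, Pi.smul_apply, h₂, Finset.sum_apply, smul_eq_mul]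

lemma setIntegral_le_mul_of_condExp_le {m m0 : MeasurableSpace Ω} {μ : Measure Ω} (hm : m ≤ m0)
    [SigmaFinite (μ.trim hm)] {f g : Ω → ℝ} (hf : Integrable f μ) (hg : Integrable g μ) {β : ℝ}
    (hfg : μ[f | m] ≤ᵐ[μ] fun ω => β * μ[g | m] ω) {s : Set Ω} (hs : MeasurableSet[m] s) :
    ∫ ω in s, f ω ∂μ ≤ β * ∫ ω in s, g ω ∂μ := by
  rw [← setIntegral_condExp hm hf hs, ← setIntegral_condExp hm hg hs, ← integral_const_mul]
  exact setIntegral_mono_ae integrable_condExp.integrableOn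
    (integrable_condExp.const_mul β).integrableOn hfg

variable [MeasurableSpace Ω] {μ : Measure Ω}

lemma integral_le_toReal_lintegral_ofReal {f : Ω → ℝ} (hf : ∀ ω, 0 ≤ f ω) :
    ∫ ω, f ω ∂μ ≤ (∫⁻ ω, ENNReal.ofReal (f ω) ∂μ).toReal := by
  refine (le_abs_self _).trans ((norm_integral_le_lintegral_norm f).trans_eq ?_)
  simp only [Real.norm_of_nonneg (hf _)]

lemma lintegral_sum_le_of_setLIntegral_le {f g : ℕ → Ω → ℝ≥0∞} (hf : ∀ r, Measurable (f r))
    (hg : ∀ r, Measurable (g r)) {B : ℕ → Set Ω} (hB : ∀ r, MeasurableSet (B r))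
    {W : Ω → Finset ℕ} (hW : ∀ᵐ ω ∂μ, ∀ r, ω ∈ B r ↔ r ∈ W ω) {ε : ℝ≥0∞}
    (hfg : ∀ r, ∫⁻ ω in B r, f r ω ∂μ ≤ ε * ∫⁻ ω in B r, g r ω ∂μ) :
    ∫⁻ ω, ∑ r ∈ W ω, f r ω ∂μ ≤ ε * ∫⁻ ω, ∑ r ∈ W ω, g r ω ∂μ := by
  have htsum : ∀ h : ℕ → Ω → ℝ≥0∞,
      (fun ω => ∑ r ∈ W ω, h r ω) =ᵐ[μ] fun ω => ∑' r, (B r).indicator (h r) ω := fun h => by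
    filter_upwards [hW] with ω hω
    rw [tsum_eq_sum fun r hr => Set.indicator_of_notMem (mt (hω r).1 hr) _]
    exact sum_congr rfl fun r hr => (Set.indicator_of_mem ((hω r).2 hr) _).symm
  rw [lintegral_congr_ae (htsum f), lintegral_congr_ae (htsum g),
    lintegral_tsum fun r => ((hf r).indicator (hB r)).aemeasurable,
    lintegral_tsum fun r => ((hg r).indicator (hB r)).aemeasurable, ← ENNReal.tsum_mul_left]
  refine ENNReal.tsum_le_tsum fun r => ?_
  simpa only [lintegral_indicator (hB r)] using hfg r

end

section WindowEvent

variable {Ω : Type*}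

/-- The event `{τ(s) < r ≤ τ(t)}` (see `mem_windowEvent_iff`), written through the partial sums
up to time `r - 1` only, so that it is `F (r - 1)`-measurable. -/
def windowEvent (q : Ω → ℕ → ℝ) (s t : ℝ) (r : ℕ) : Set Ω :=
  {ω | ∃ u < r, 1 ≤ u ∧ s ≤ ∑ v ∈ Icc 1 u, q ω v} \
    {ω | ∃ u < r, 1 ≤ u ∧ t ≤ ∑ v ∈ Icc 1 u, q ω v}

lemma mem_windowEvent_iff {q : Ω → ℕ → ℝ} {s t : ℝ} {ω : Ω}
    (hs : {u : ℕ | 1 ≤ u ∧ s ≤ ∑ v ∈ Icc 1 u, q ω v}.Nonempty)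
    (ht : {u : ℕ | 1 ≤ u ∧ t ≤ ∑ v ∈ Icc 1 u, q ω v}.Nonempty) (r : ℕ) :
    ω ∈ windowEvent q s t r ↔ r ∈ Icc (genInv (q ω) s + 1) (genInv (q ω) t) := by
  simp only [windowEvent, Set.mem_sdiff, Set.mem_ofPred_eq, ← genInv_lt_iff _ hs,
    ← genInv_lt_iff _ ht, mem_Icc]
  omega

lemma measurableSet_windowEvent {m0 : MeasurableSpace Ω} {F : Filtration ℕ m0}
    {q : Ω → ℕ → ℝ} (hq : ∀ v, Measurable[F v] fun ω => q ω v) (s t : ℝ) (r : ℕ) :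
    MeasurableSet[F (r - 1)] (windowEvent q s t r) := by
  have hcross : ∀ a u, MeasurableSet[F u] {ω | 1 ≤ u ∧ a ≤ ∑ v ∈ Icc 1 u, q ω v} := fun a u =>
    (MeasurableSet.const _).inter <| measurableSet_le measurable_const <|
      Finset.measurable_sum _ fun v hv => (hq v).mono (F.mono (mem_Icc.1 hv).2) le_rfl
  exact (measurableSet_exists_lt (hcross s) r).diff (measurableSet_exists_lt (hcross t) r)

end WindowEvent

section Offspring

variable {Ω : Type*} {m0 : MeasurableSpace Ω} {P : Measure Ω} {F : Filtration ℕ m0} {N : ℕ}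
  {ν : ℕ → Fin N → Ω → ℕ}

lemma measurable_offspring_comp (hν : ∀ r i, Measurable[F r] (ν r i))
    (g : (Fin N → ℕ) → ℝ) (r : ℕ) : Measurable[F r] fun ω => g fun i => ν r i ω :=
  (measurable_of_countable g).comp (@measurable_pi_lambda _ _ _ (F r) _ _ (hν r))

lemma integrable_offspring_comp [IsFiniteMeasure P] (hν : ∀ r i, Measurable[F r] (ν r i))
    {r : ℕ} (hsum : ∀ᵐ ω ∂P, ∑ i, ν r i ω = N) (g : (Fin N → ℕ) → ℝ) :
    Integrable (fun ω => g fun i => ν r i ω) P := by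
  have hfin : {v : Fin N → ℕ | ∑ i, v i = N}.Finite :=
    (Set.Finite.pi fun _ => Set.finite_Iic N).subset fun v hv i _ => by
      have := single_le_sum (fun j _ => Nat.zero_le (v j)) (mem_univ i)
      simp only [Set.mem_ofPred_eq] at hv
      simp only [Set.mem_Iic]
      omega
  obtain ⟨C, hC⟩ := (hfin.image fun v => ‖g v‖).bddAbove
  refine Integrable.of_bound
    ((measurable_offspring_comp hν g r).mono (F.le r) le_rfl).aestronglyMeasurable C ?_
  filter_upwards [hsum] with ω hω
  exact hC ⟨_, hω, rfl⟩

lemma setIntegral_multiRate_le [IsFiniteMeasure P] (hN : 3 ≤ N)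
    (hν : ∀ r i, Measurable[F r] (ν r i)) {r : ℕ} (hsum : ∀ᵐ ω ∂P, ∑ i, ν r i ω = N) {β : ℝ}
    (hcond : P[fun ω => thirdRate N (fun i => ν r i ω) | F (r - 1)] ≤ᵐ[P]
      fun ω => β * P[fun ω => pairRate N (fun i => ν r i ω) | F (r - 1)] ω)
    {B : Set Ω} (hB : MeasurableSet[F (r - 1)] B) :
    ∫ ω in B, multiRate N (fun i => ν r i ω) ∂P ≤
      (2 * β + 4 / N) * ∫ ω in B, pairRate N (fun i => ν r i ω) ∂P := by
  have hint := integrable_offspring_comp hν hsum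
  calc ∫ ω in B, multiRate N (fun i => ν r i ω) ∂P
      ≤ ∫ ω in B, (2 * thirdRate N (fun i => ν r i ω) + 4 / N * pairRate N (fun i => ν r i ω)) ∂P :=
        setIntegral_mono_ae (hint _).integrableOn
          (hint fun v => 2 * thirdRate N v + 4 / N * pairRate N v).integrableOn
          (hsum.mono fun ω hω => multiRate_le hN _ hω)
    _ = 2 * ∫ ω in B, thirdRate N (fun i => ν r i ω) ∂P +
          4 / N * ∫ ω in B, pairRate N (fun i => ν r i ω) ∂P := by
        rw [integral_add ((hint _).const_mul 2).integrableOn ((hint _).const_mul _).integrableOn,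
          integral_const_mul, integral_const_mul]
    _ ≤ 2 * (β * ∫ ω in B, pairRate N (fun i => ν r i ω) ∂P) +
          4 / N * ∫ ω in B, pairRate N (fun i => ν r i ω) ∂P := by
        gcongr
        exact setIntegral_le_mul_of_condExp_le (F.le _) (hint _) (hint _) hcond hB
    _ = _ := by ring

lemma condExp_thirdRate_le [IsFiniteMeasure P] (hν : ∀ r i, Measurable[F r] (ν r i)) {r : ℕ}
    (hsum : ∀ᵐ ω ∂P, ∑ i, ν r i ω = N) {β : ℝ}
    (hmom : ∀ᵐ ω ∂P,
      (1 / ((N : ℝ) * (N - 1) * (N - 2))) * ∑ i, P[fun ω' =>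
          (ν r i ω' : ℝ) * ((ν r i ω' : ℝ) - 1) * ((ν r i ω' : ℝ) - 2) | F (r - 1)] ω ≤
        β * ((1 / ((N : ℝ) * (N - 1))) *
          ∑ i, P[fun ω' => (ν r i ω' : ℝ) * ((ν r i ω' : ℝ) - 1) | F (r - 1)] ω)) :
    P[fun ω => thirdRate N (fun i => ν r i ω) | F (r - 1)] ≤ᵐ[P]
      fun ω => β * P[fun ω => pairRate N (fun i => ν r i ω) | F (r - 1)] ω := by
  have hint := integrable_offspring_comp hν hsum
  have hT : P[fun ω => thirdRate N (fun i => ν r i ω) | F (r - 1)] =ᵐ[P]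
      fun ω => (1 / ((N : ℝ) * (N - 1) * (N - 2))) * ∑ i, P[fun ω' =>
        (ν r i ω' : ℝ) * ((ν r i ω' : ℝ) - 1) * ((ν r i ω' : ℝ) - 2) | F (r - 1)] ω :=
    condExp_const_mul_sum _ _ fun i _ => hint fun v => (v i : ℝ) * (v i - 1) * (v i - 2)
  have hc : P[fun ω => pairRate N (fun i => ν r i ω) | F (r - 1)] =ᵐ[P]
      fun ω => (1 / ((N : ℝ) * (N - 1))) *
        ∑ i, P[fun ω' => (ν r i ω' : ℝ) * ((ν r i ω' : ℝ) - 1) | F (r - 1)] ω :=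
    condExp_const_mul_sum _ _ fun i _ => hint fun v => (v i : ℝ) * (v i - 1)
  filter_upwards [hT, hc, hmom] with ω hT hc hmom
  rwa [hT, hc]

lemma setLIntegral_windowEvent_multiRate_le [IsFiniteMeasure P] (hN : 3 ≤ N)
    (hν : ∀ r i, Measurable[F r] (ν r i)) (hsum : ∀ r, 1 ≤ r → ∀ᵐ ω ∂P, ∑ i, ν r i ω = N)
    {β : ℝ} (hcond : ∀ r, 1 ≤ r →
      P[fun ω => thirdRate N (fun i => ν r i ω) | F (r - 1)] ≤ᵐ[P]
        fun ω => β * P[fun ω => pairRate N (fun i => ν r i ω) | F (r - 1)] ω)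
    (s t : ℝ) (r : ℕ) :
    let B := windowEvent (fun ω r => pairRate N (fun i => ν r i ω)) s t r
    ∫⁻ ω in B, ENNReal.ofReal (multiRate N fun i => ν r i ω) ∂P ≤
      ENNReal.ofReal (2 * β + 4 / N) *
        ∫⁻ ω in B, ENNReal.ofReal (pairRate N fun i => ν r i ω) ∂P := by
  intro B
  rcases r with _ | r
  · simp [B, windowEvent]
  have hint := integrable_offspring_comp hν (hsum (r + 1) (by omega))
  rw [← ofReal_integral_eq_lintegral_ofReal (hint _).integrableOn
      (.of_forall fun _ => multiRate_nonneg _ _),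
    ← ofReal_integral_eq_lintegral_ofReal (hint _).integrableOn
      (.of_forall fun _ => pairRate_nonneg _ _),
    ← ENNReal.ofReal_mul' (setIntegral_nonneg_of_ae (.of_forall fun _ => pairRate_nonneg _ _))]
  exact ENNReal.ofReal_le_ofReal <| setIntegral_multiRate_le hN hν (hsum _ (by omega))
    (hcond _ (by omega)) (measurableSet_windowEvent (measurable_offspring_comp hν _) s t _)

lemma integral_sum_window_multiRate_le [IsProbabilityMeasure P] (hN : 3 ≤ N)
    (hν : ∀ r i, Measurable[F r] (ν r i)) (hsum : ∀ r, 1 ≤ r → ∀ᵐ ω ∂P, ∑ i, ν r i ω = N)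
    (hfin : ∀ a : ℝ, ∀ᵐ ω ∂P,
      {u : ℕ | 1 ≤ u ∧ a ≤ ∑ v ∈ Icc 1 u, pairRate N (fun i => ν v i ω)}.Nonempty)
    {β : ℝ} (hcond : ∀ r, 1 ≤ r →
      P[fun ω => thirdRate N (fun i => ν r i ω) | F (r - 1)] ≤ᵐ[P]
        fun ω => β * P[fun ω => pairRate N (fun i => ν r i ω) | F (r - 1)] ω)
    (s t : ℝ) :
    ∫ ω, ∑ r ∈ Icc (genInv (fun r => pairRate N (fun i => ν r i ω)) s + 1)
        (genInv (fun r => pairRate N (fun i => ν r i ω)) t), multiRate N (fun i => ν r i ω) ∂P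
      ≤ max (2 * β + 4 / N) 0 * (max t 0 + 1) := by
  set q : Ω → ℕ → ℝ := fun ω r => pairRate N (fun i => ν r i ω)
  set W : Ω → Finset ℕ := fun ω => Icc (genInv (q ω) s + 1) (genInv (q ω) t)
  have hW : ∀ᵐ ω ∂P, ∀ r, ω ∈ windowEvent q s t r ↔ r ∈ W ω := by
    filter_upwards [hfin s, hfin t] with ω hs ht using mem_windowEvent_iff hs ht
  have hmeas : ∀ g : (Fin N → ℕ) → ℝ, ∀ r,
      Measurable fun ω => ENNReal.ofReal (g fun i => ν r i ω) := fun g r =>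
    ENNReal.measurable_ofReal.comp ((measurable_offspring_comp hν g r).mono (F.le r) le_rfl)
  have hcum : ∀ᵐ ω ∂P, ∑ r ∈ W ω, q ω r ≤ max t 0 + 1 := by
    have hle : ∀ᵐ ω ∂P, ∀ r, 1 ≤ r → q ω r ≤ 1 := ae_all_iff.2 fun r =>
      if hr : 1 ≤ r then (hsum r hr).mono fun ω hω _ => pairRate_le_one _ hω
      else .of_forall fun _ h => absurd h hr
    filter_upwards [hle, hfin t] with ω hle ht
    refine le_trans ?_ (sum_Icc_genInv_le (q ω) hle ht)
    exact sum_le_sum_of_subset_of_nonneg (Icc_subset_Icc (by omega) le_rfl)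
      fun _ _ _ => pairRate_nonneg _ _
  have hlint : ∫⁻ ω, ENNReal.ofReal (∑ r ∈ W ω, multiRate N fun i => ν r i ω) ∂P ≤
      ENNReal.ofReal (2 * β + 4 / N) * ENNReal.ofReal (max t 0 + 1) := by
    rw [lintegral_congr fun ω =>
      ENNReal.ofReal_sum_of_nonneg fun r _ => multiRate_nonneg N fun i => ν r i ω]
    refine (lintegral_sum_le_of_setLIntegral_le (hmeas _) (hmeas _)
      (fun r => F.le _ _ (measurableSet_windowEvent (measurable_offspring_comp hν _) s t r)) hW
      (setLIntegral_windowEvent_multiRate_le hN hν hsum hcond s t)).trans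
      (mul_le_mul_right ?_ _)
    calc ∫⁻ ω, ∑ r ∈ W ω, ENNReal.ofReal (q ω r) ∂P
        = ∫⁻ ω, ENNReal.ofReal (∑ r ∈ W ω, q ω r) ∂P := lintegral_congr fun ω =>
          (ENNReal.ofReal_sum_of_nonneg fun r _ => pairRate_nonneg N fun i => ν r i ω).symm
      _ ≤ ∫⁻ _, ENNReal.ofReal (max t 0 + 1) ∂P :=
          lintegral_mono_ae (hcum.mono fun _ h => ENNReal.ofReal_le_ofReal h)
      _ = _ := by simp
  have h := ENNReal.toReal_mono (by finiteness) hlint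
  rw [ENNReal.toReal_mul, ENNReal.toReal_ofReal', ENNReal.toReal_ofReal (by positivity)] at h
  exact (integral_le_toReal_lintegral_ofReal fun ω =>
    sum_nonneg fun r _ => multiRate_nonneg N _).trans h

end Offspring

theorem expected_cumulative_DN_tendsto_zero_general
    (Ω : ℕ → Type*) (mΩ : ∀ N, MeasurableSpace (Ω N))
    (P : ∀ N, Measure (Ω N)) (hP : ∀ N, IsProbabilityMeasure (P N))
    (F : ∀ N, Filtration ℕ (mΩ N))
    (ν : ∀ N, ℕ → Fin N → Ω N → ℕ)
    (hadapted : ∀ N t i, Measurable[(F N) t] (ν N t i))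
    (hsum : ∀ N : ℕ, 3 ≤ N → ∀ t : ℕ, 1 ≤ t → ∀ᵐ ω ∂(P N), ∑ i, ν N t i ω = N)
    (hfin : ∀ N : ℕ, 3 ≤ N → ∀ t : ℝ, ∀ᵐ ω ∂(P N),
      {s : ℕ | 1 ≤ s ∧ t ≤ ∑ r ∈ Finset.Icc 1 s,
        pairRate N (fun i => ν N r i ω)}.Nonempty)
    (b : ℕ → ℝ) (hb : Tendsto b atTop (nhds 0))
    (hmom : ∀ N : ℕ, 3 ≤ N → ∀ t : ℕ, 1 ≤ t → ∀ᵐ ω ∂(P N),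
      (1 / ((N : ℝ) * (N - 1) * (N - 2))) *
          ∑ i, condExp ((F N) (t - 1)) (P N)
            (fun ω' => (ν N t i ω' : ℝ) * ((ν N t i ω' : ℝ) - 1) *
              ((ν N t i ω' : ℝ) - 2)) ω ≤
        b N * ((1 / ((N : ℝ) * (N - 1))) *
          ∑ i, condExp ((F N) (t - 1)) (P N)
            (fun ω' => (ν N t i ω' : ℝ) * ((ν N t i ω' : ℝ) - 1)) ω))
    (s t : ℝ) :
    Tendsto (fun N : ℕ =>
        ∫ ω, ∑ r ∈ Finset.Icc
            (genInv (fun r => pairRate N (fun i => ν N r i ω)) s + 1)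
            (genInv (fun r => pairRate N (fun i => ν N r i ω)) t),
          multiRate N (fun i => ν N r i ω) ∂(P N))
      atTop (nhds 0) := by
  refine squeeze_zero' (g := fun N => max (2 * b N + 4 / N) 0 * (max t 0 + 1))
    (.of_forall fun N => integral_nonneg fun ω => sum_nonneg fun r _ => multiRate_nonneg N _)
    ((eventually_ge_atTop 3).mono fun N hN => ?_) ?_
  · have := hP N
    exact integral_sum_window_multiRate_le (β := b N) hN (hadapted N) (hsum N hN) (hfin N hN)
      (fun r hr => condExp_thirdRate_le (hadapted N) (hsum N hN r hr) (hmom N hN r hr)) s t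
  have hrate : Tendsto (fun N : ℕ => 2 * b N + 4 / N) atTop (nhds 0) := by
    simpa using (hb.const_mul 2).add (tendsto_const_div_atTop_nhds_zero_nat 4)
  simpa using (hrate.max (tendsto_const_nhds (x := (0 : ℝ)))).mul_const (max t 0 + 1)

/-- **Lemma 3 of the paper.** Under the third falling factorial moment
condition with `b_N → 0` the expected cumulated multiple-merger rate over rescaled time
intervals vanishes as `N → ∞`. -/
theorem expected_cumulative_DN_tendsto_zero
    (Ω : ℕ → Type*) (mΩ : ∀ N, MeasurableSpace (Ω N))
    (P : ∀ N, Measure (Ω N)) (hP : ∀ N, IsProbabilityMeasure (P N))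
    (F : ∀ N, Filtration ℕ (mΩ N))
    (ν : ∀ N, ℕ → Fin N → Ω N → ℕ)
    (hadapted : ∀ N t i, Measurable[(F N) t] (ν N t i))
    (hsum : ∀ N : ℕ, 3 ≤ N → ∀ t : ℕ, 1 ≤ t → ∀ᵐ ω ∂(P N), ∑ i, ν N t i ω = N)
    (hfin : ∀ N : ℕ, 3 ≤ N → ∀ t : ℝ, ∀ᵐ ω ∂(P N),
      {s : ℕ | 1 ≤ s ∧ t ≤ ∑ r ∈ Finset.Icc 1 s,
        pairRate N (fun i => ν N r i ω)}.Nonempty)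
    (b : ℕ → ℝ) (hb : Tendsto b atTop (nhds 0))
    (hmom : ∀ N : ℕ, 3 ≤ N → ∀ t : ℕ, 1 ≤ t → ∀ᵐ ω ∂(P N),
      (1 / ((N : ℝ) * (N - 1) * (N - 2))) *
          ∑ i, condExp ((F N) (t - 1)) (P N)
            (fun ω' => (ν N t i ω' : ℝ) * ((ν N t i ω' : ℝ) - 1) *
              ((ν N t i ω' : ℝ) - 2)) ω ≤
        b N * ((1 / ((N : ℝ) * (N - 1))) *
          ∑ i, condExp ((F N) (t - 1)) (P N)
            (fun ω' => (ν N t i ω' : ℝ) * ((ν N t i ω' : ℝ) - 1)) ω))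
    (s t : ℝ) (hs : 0 ≤ s) (hst : s < t) :
    Tendsto (fun N : ℕ =>
        ∫ ω, ∑ r ∈ Finset.Icc
            (genInv (fun r => pairRate N (fun i => ν N r i ω)) s + 1)
            (genInv (fun r => pairRate N (fun i => ν N r i ω)) t),
          multiRate N (fun i => ν N r i ω) ∂(P N))
      atTop (nhds 0) :=
  expected_cumulative_DN_tendsto_zero_general Ω mΩ P hP F ν hadapted hsum hfin b hb hmom s t
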